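/- arXiv:1704.07731 — 7 statements merged into one kernel-verified Lean document; each statement's English description precedes it below -/
import Mathlib

section
/- For every natural number p > 2, the real polynomial 𝒳_p(x) = x^{p+1}(x² − x − 1) + x² satisfies 𝒳_p(1) = 0 and 𝒳_p′(1) = 2 − p < 0, and possesses a real root λ with 1 < λ < (1+√5)/2. -/
/-!
Since `φ² - φ - 1 = 0`, `𝒳_p(φ) = φ² > 0`, while `𝒳_p(11/10) = (11/10)² - (89/100)(11/10)^(p+1)`
is negative once `p ≥ 3` (already `(89/100)(11/10)⁴ > (11/10)²`); the intermediate value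
theorem gives a root in `(11/10, φ)`.
-/

open Set Real

namespace DegreeGrowth

def chi (p : ℕ) (x : ℝ) : ℝ := x ^ (p + 1) * (x ^ 2 - x - 1) + x ^ 2

theorem chi_one (p : ℕ) : chi p 1 = 0 := by
  simp only [chi]
  ring

theorem hasDerivAt_chi (p : ℕ) (x : ℝ) :
    HasDerivAt (chi p)
      ((p + 1) * x ^ p * (x ^ 2 - x - 1) + x ^ (p + 1) * (2 * x - 1) + 2 * x) x := by
  have hquad : HasDerivAt (fun x : ℝ => x ^ 2 - x - 1) (2 * x - 1) x := by
    simpa using ((hasDerivAt_pow 2 x).sub (hasDerivAt_id x)).sub_const 1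
  refine (((hasDerivAt_pow (p + 1) x).mul hquad).add (hasDerivAt_pow 2 x)).congr_deriv ?_
  simp only [Nat.cast_add, Nat.cast_one, Nat.add_sub_cancel, Nat.cast_ofNat]
  ring

theorem hasDerivAt_chi_one (p : ℕ) : HasDerivAt (chi p) (2 - p) 1 := by
  convert hasDerivAt_chi p 1 using 1
  ring

theorem continuous_chi (p : ℕ) : Continuous (chi p) := by
  unfold chi
  fun_prop

theorem chi_goldenRatio (p : ℕ) : chi p goldenRatio = goldenRatio ^ 2 := by
  simp only [chi, goldenRatio_sq]
  ring

theorem chi_eleven_div_ten_neg {p : ℕ} (hp : 3 ≤ p) : chi p (11 / 10) < 0 := by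
  have hpow : (11 / 10 : ℝ) ^ 4 ≤ (11 / 10 : ℝ) ^ (p + 1) :=
    pow_le_pow_right₀ (by norm_num) (by omega)
  simp only [chi]
  nlinarith

theorem exists_chi_eq_zero {p : ℕ} (hp : 3 ≤ p) :
    ∃ lam ∈ Ioo (11 / 10 : ℝ) goldenRatio, chi p lam = 0 := by
  have hle : (11 / 10 : ℝ) ≤ goldenRatio := by
    have : (2 : ℝ) < √5 := by rw [lt_sqrt (by norm_num)]; norm_num
    simp only [goldenRatio]
    linarith
  have hsign : (0 : ℝ) ∈ Ioo (chi p (11 / 10)) (chi p goldenRatio) :=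
    ⟨chi_eleven_div_ten_neg hp, by rw [chi_goldenRatio]; exact pow_pos goldenRatio_pos 2⟩
  exact intermediate_value_Ioo hle (continuous_chi p).continuousOn hsign

end DegreeGrowth

open DegreeGrowth in
/-- For every natural `p > 2`, the real polynomial `𝒳_p(x) = x^(p+1)(x²−x−1) + x²`
satisfies `𝒳_p(1) = 0`, `𝒳_p'(1) = 2 − p < 0`, and has a real root `λ` with
`1 < λ < (1+√5)/2`. -/
theorem stmt2 (p : ℕ) (hp : 2 < p) (Xp : ℝ → ℝ)
    (hXp : ∀ x : ℝ, Xp x = x ^ (p + 1) * (x ^ 2 - x - 1) + x ^ 2) :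
    Xp 1 = 0 ∧ deriv Xp 1 = 2 - (p : ℝ) ∧ deriv Xp 1 < 0 ∧
      ∃ lam : ℝ, 1 < lam ∧ lam < (1 + Real.sqrt 5) / 2 ∧ Xp lam = 0 := by
  obtain rfl : Xp = chi p := funext hXp
  have hderiv : deriv (chi p) 1 = 2 - (p : ℝ) := (hasDerivAt_chi_one p).deriv
  have hp' : (2 : ℝ) < p := by exact_mod_cast hp
  obtain ⟨lam, ⟨hlo, hhi⟩, hroot⟩ := exists_chi_eq_zero hp
  exact ⟨chi_one p, hderiv, by linarith, lam, by linarith, hhi, hroot⟩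
end

section
/- There exists a sequence (λ_k)_{k≥1} of real numbers such that for every natural number k ≥ 1 one has 1 < λ_k < (1+√5)/2 and λ_k^{2k+1}(λ_k² − λ_k − 1) + 1 = 0, and λ_k tends to (1+√5)/2 as k → ∞. In particular, for every k ≥ 1 the polynomial 𝒳_k(x) = x^{2k+1}(x²−x−1)+1 has a real root strictly between 1 and the golden mean. -/
open Filter

private lemma key_root (k : ℕ) (hk : 1 ≤ k) :
    ∃ x : ℝ, (1 + Real.sqrt 3) / 2 < x ∧ x < (1 + Real.sqrt 5) / 2 ∧
      x ^ (2 * k + 1) * (x ^ 2 - x - 1) + 1 = 0 := by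
  have h3 : Real.sqrt 3 ^ 2 = 3 := Real.sq_sqrt (by norm_num)
  have h5 : Real.sqrt 5 ^ 2 = 5 := Real.sq_sqrt (by norm_num)
  have h3n : (0:ℝ) ≤ Real.sqrt 3 := Real.sqrt_nonneg 3
  have h5n : (0:ℝ) ≤ Real.sqrt 5 := Real.sqrt_nonneg 5
  have h31 : 1 < Real.sqrt 3 := by nlinarith
  have h35 : Real.sqrt 3 < Real.sqrt 5 := by nlinarith
  set a : ℝ := (1 + Real.sqrt 3) / 2 with ha_def
  set b : ℝ := (1 + Real.sqrt 5) / 2 with hb_def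
  have ha1 : 1 < a := by rw [ha_def]; linarith
  have hab : a < b := by rw [ha_def, hb_def]; linarith
  have ha2 : a ^ 2 - a - 1 = -(1/2) := by rw [ha_def]; nlinarith
  have hb2 : b ^ 2 - b - 1 = 0 := by rw [hb_def]; nlinarith
  have ha3 : 2 < a ^ 3 := by rw [ha_def]; nlinarith
  have hpow : a ^ 3 ≤ a ^ (2 * k + 1) := by
    apply pow_le_pow_right₀ (le_of_lt ha1); omega
  have hfa : a ^ (2 * k + 1) * (a ^ 2 - a - 1) + 1 < 0 := by
    rw [ha2]; nlinarith
  have hfb : b ^ (2 * k + 1) * (b ^ 2 - b - 1) + 1 = 1 := by rw [hb2]; ring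
  have hcont : ContinuousOn (fun x : ℝ => x ^ (2 * k + 1) * (x ^ 2 - x - 1) + 1)
      (Set.Icc a b) := by fun_prop
  have h0 : (0:ℝ) ∈ Set.Ioo ((fun x : ℝ => x ^ (2 * k + 1) * (x ^ 2 - x - 1) + 1) a)
      ((fun x : ℝ => x ^ (2 * k + 1) * (x ^ 2 - x - 1) + 1) b) := by
    constructor
    · simpa using hfa
    · simp only; rw [hfb]; norm_num
  obtain ⟨x, hx, hfx⟩ := intermediate_value_Ioo (le_of_lt hab) hcont h0
  exact ⟨x, hx.1, hx.2, hfx⟩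

/-- There is a sequence `(λ_k)_{k≥1}` of reals with `1 < λ_k < (1+√5)/2`,
`λ_k^(2k+1)(λ_k² − λ_k − 1) + 1 = 0`, and `λ_k → (1+√5)/2` as `k → ∞`.
In particular, for every `k ≥ 1` the polynomial `x^(2k+1)(x²−x−1)+1` has a real
root strictly between `1` and the golden mean. -/
theorem stmt3 :
    (∃ lam : ℕ → ℝ,
      (∀ k : ℕ, 1 ≤ k →
        1 < lam k ∧ lam k < (1 + Real.sqrt 5) / 2 ∧
          (lam k) ^ (2 * k + 1) * ((lam k) ^ 2 - lam k - 1) + 1 = 0) ∧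
      Tendsto lam atTop (nhds ((1 + Real.sqrt 5) / 2))) ∧
    ∀ k : ℕ, 1 ≤ k →
      ∃ x : ℝ, 1 < x ∧ x < (1 + Real.sqrt 5) / 2 ∧
        x ^ (2 * k + 1) * (x ^ 2 - x - 1) + 1 = 0 := by
  have h3 : Real.sqrt 3 ^ 2 = 3 := Real.sq_sqrt (by norm_num)
  have h5 : Real.sqrt 5 ^ 2 = 5 := Real.sq_sqrt (by norm_num)
  have h3n : (0:ℝ) ≤ Real.sqrt 3 := Real.sqrt_nonneg 3
  have h5n : (0:ℝ) ≤ Real.sqrt 5 := Real.sqrt_nonneg 5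
  have h31 : 1 < Real.sqrt 3 := by nlinarith
  have h35 : Real.sqrt 3 < Real.sqrt 5 := by nlinarith
  set a : ℝ := (1 + Real.sqrt 3) / 2 with ha_def
  set b : ℝ := (1 + Real.sqrt 5) / 2 with hb_def
  have ha1 : 1 < a := by rw [ha_def]; linarith
  have hab : a < b := by rw [ha_def, hb_def]; linarith
  have hb2 : b ^ 2 - b - 1 = 0 := by rw [hb_def]; nlinarith
  classical
  set lam : ℕ → ℝ := fun k => if h : 1 ≤ k then (key_root k h).choose else b with hlam
  have hprop : ∀ k : ℕ, 1 ≤ k → a < lam k ∧ lam k < b ∧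
      (lam k) ^ (2 * k + 1) * ((lam k) ^ 2 - lam k - 1) + 1 = 0 := by
    intro k hk
    simp only [hlam, dif_pos hk]
    exact (key_root k hk).choose_spec
  -- key bound : b - lam k ≤ (a⁻¹) ^ (2*k+1) for k ≥ 1
  have hbound : ∀ k : ℕ, 1 ≤ k → b - lam k ≤ (a⁻¹) ^ (2 * k + 1) := by
    intro k hk
    obtain ⟨hL1, hLb, hLroot⟩ := hprop k hk
    set L := lam k
    have hL0 : (1:ℝ) < L := lt_trans ha1 hL1
    -- L² - L - 1 = (L - b)(L + b - 1)
    have hfact : L ^ 2 - L - 1 = (L - b) * (L + b - 1) := by nlinarith [hb2]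
    have heq : (b - L) * (L ^ (2 * k + 1) * (L + b - 1)) = 1 := by
      rw [hfact] at hLroot; nlinarith [hLroot]
    have hLpow_pos : (0:ℝ) < L ^ (2 * k + 1) := pow_pos (by linarith) _
    have hapow_pos : (0:ℝ) < a ^ (2 * k + 1) := pow_pos (by linarith) _
    have hLba : a ^ (2 * k + 1) ≤ L ^ (2 * k + 1) :=
      pow_le_pow_left₀ (by linarith) (le_of_lt hL1) _
    have hplus : (1:ℝ) ≤ L + b - 1 := by linarith [lt_trans hab (lt_of_le_of_lt (le_refl b) (by linarith : b < b + 1))]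
    have hbL : 0 ≤ b - L := le_of_lt (by linarith)
    have step1 : (b - L) * a ^ (2 * k + 1) ≤ (b - L) * (L ^ (2 * k + 1) * (L + b - 1)) := by
      apply mul_le_mul_of_nonneg_left _ hbL
      calc a ^ (2 * k + 1) ≤ L ^ (2 * k + 1) := hLba
        _ = L ^ (2 * k + 1) * 1 := by ring
        _ ≤ L ^ (2 * k + 1) * (L + b - 1) :=
            mul_le_mul_of_nonneg_left hplus (le_of_lt hLpow_pos)
    have step2 : (b - L) * a ^ (2 * k + 1) ≤ 1 := by rw [heq] at step1; exact step1
    have : b - L ≤ 1 / a ^ (2 * k + 1) := by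
      rw [le_div_iff₀ hapow_pos]; exact step2
    calc b - L ≤ 1 / a ^ (2 * k + 1) := this
      _ = (a⁻¹) ^ (2 * k + 1) := by rw [inv_pow]; rw [one_div]
  have hub : ∀ k : ℕ, 1 ≤ k → lam k ≤ b := fun k hk => le_of_lt (hprop k hk).2.1
  -- convergence
  have hainv : a⁻¹ < 1 := by rw [inv_lt_one_iff₀]; right; exact ha1
  have hainv0 : (0:ℝ) ≤ a⁻¹ := by positivity
  have htend0 : Tendsto (fun k : ℕ => (a⁻¹) ^ (2 * k + 1)) atTop (nhds 0) := by
    have h1 : Tendsto (fun n : ℕ => (a⁻¹) ^ n) atTop (nhds 0) :=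
      tendsto_pow_atTop_nhds_zero_of_lt_one hainv0 hainv
    have h2 : Tendsto (fun k : ℕ => 2 * k + 1) atTop atTop := by
      apply tendsto_atTop_mono (fun k => by omega : ∀ k : ℕ, k ≤ 2 * k + 1) tendsto_id
    exact h1.comp h2
  have hlo : Tendsto (fun k : ℕ => b - (a⁻¹) ^ (2 * k + 1)) atTop (nhds b) := by
    have := (tendsto_const_nhds (x := b) (f := atTop (α := ℕ))).sub htend0
    simpa using this
  have htend : Tendsto lam atTop (nhds b) := by
    apply tendsto_of_tendsto_of_tendsto_of_le_of_le' hlo tendsto_const_nhds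
    · filter_upwards [eventually_ge_atTop 1] with k hk
      linarith [hbound k hk]
    · filter_upwards [eventually_ge_atTop 1] with k hk
      exact hub k hk
  refine ⟨⟨lam, fun k hk => ?_, htend⟩, fun k hk => ?_⟩
  · obtain ⟨h1, h2, h3⟩ := hprop k hk
    exact ⟨lt_trans ha1 h1, h2, h3⟩
  · obtain ⟨x, hx1, hx2, hx3⟩ := key_root k hk
    exact ⟨x, lt_trans ha1 hx1, hx2, hx3⟩
end

section
/- For all natural numbers k ≥ 1 and p with k·p > 2k + 2 (equivalently p > 2(1+k)/k), the real polynomial 𝒳_{(k,p)}(x) = x^{p+1}(x^{2k+3} − x^{2k+2} − x^{2k+1} + 1) + x^{2k+3} − x² − x + 1 has a real root λ > 1. -/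
/-- For all naturals `k ≥ 1` and `p` with `k·p > 2k + 2` (i.e. `p > 2(1+k)/k`),
the real polynomial
`𝒳_{(k,p)}(x) = x^(p+1)(x^(2k+3) − x^(2k+2) − x^(2k+1) + 1) + x^(2k+3) − x² − x + 1`
has a real root `λ > 1`. -/
theorem stmt5 (k p : ℕ) (hk : 1 ≤ k) (hkp : 2 * k + 2 < k * p) :
    ∃ lam : ℝ, 1 < lam ∧
      lam ^ (p + 1) *
          (lam ^ (2 * k + 3) - lam ^ (2 * k + 2) - lam ^ (2 * k + 1) + 1) +
        lam ^ (2 * k + 3) - lam ^ 2 - lam + 1 = 0 := by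
  obtain ⟨m, rfl⟩ : ∃ m, p = m + 1 := by
    cases p with
    | zero => simp at hkp
    | succ q => exact ⟨q, rfl⟩
  set n := 2 * k with hn
  set f : ℝ → ℝ := fun x => (∑ j ∈ Finset.range (m + n + 4), x ^ j)
      - x ^ 2 * (∑ j ∈ Finset.range m, x ^ j) * (∑ i ∈ Finset.range (n + 1), x ^ i) with hf
  have hcont : Continuous f := by
    apply Continuous.sub
    · exact continuous_finset_sum _ fun i _ => continuous_pow i
    · exact ((continuous_pow 2).mul (continuous_finset_sum _ fun i _ => continuous_pow i)).mul
        (continuous_finset_sum _ fun i _ => continuous_pow i)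
  have hmn : n + 4 < m * n := by rw [hn] at hkp ⊢; nlinarith
  have hf1 : f 1 < 0 := by
    have h1 : f 1 = (m + n + 4 : ℝ) - (m : ℝ) * ((n : ℝ) + 1) := by
      simp [hf]
    rw [h1]
    have : ((n : ℝ) + 4) < (m : ℝ) * (n : ℝ) := by exact_mod_cast hmn
    nlinarith
  have hS : ∀ N : ℕ, (∑ j ∈ Finset.range N, (2:ℝ) ^ j) = 2 ^ N - 1 := by
    intro N
    have := geom_sum_mul (2:ℝ) N
    linarith [this]
  have hf2 : 0 < f 2 := by
    have h2 : f 2 = (2 ^ (m + n + 4) - 1) - (2:ℝ) ^ 2 * (2 ^ m - 1) * (2 ^ (n + 1) - 1) := by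
      simp only [hf, hS]
    rw [h2]
    have e1 : (2:ℝ) ^ (m + n + 4) = 2 ^ m * 2 ^ n * 16 := by
      rw [pow_add, pow_add]; norm_num
    have e2 : (2:ℝ) ^ (n + 1) = 2 ^ n * 2 := by rw [pow_add]; norm_num
    have ha : (1:ℝ) ≤ 2 ^ m := one_le_pow₀ (by norm_num)
    have hb : (1:ℝ) ≤ 2 ^ n := one_le_pow₀ (by norm_num)
    rw [e1, e2]
    nlinarith
  have h0 : (0:ℝ) ∈ Set.Ioo (f 1) (f 2) := ⟨hf1, hf2⟩
  obtain ⟨lam, hmem, heq⟩ :=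
    intermediate_value_Ioo (by norm_num : (1:ℝ) ≤ 2) hcont.continuousOn h0
  refine ⟨lam, hmem.1, ?_⟩
  have key : lam ^ (m + 1 + 1) *
          (lam ^ (n + 3) - lam ^ (n + 2) - lam ^ (n + 1) + 1) +
        lam ^ (n + 3) - lam ^ 2 - lam + 1 = (lam - 1) ^ 2 * f lam := by
    rw [hf]
    have h1 := geom_sum_mul lam (m + n + 4)
    have h2 := geom_sum_mul lam m
    have h3 := geom_sum_mul lam (n + 1)
    linear_combination -(lam - 1) * h1 +
      lam ^ 2 * (lam - 1) * (∑ i ∈ Finset.range (n + 1), lam ^ i) * h2 +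
      lam ^ 2 * (lam ^ m - 1) * h3
  rw [key, heq, mul_zero]
end

section
/- For every natural number p > 6, the real polynomial 𝒴_p(x) = x^{p+1}(x³ − x − 1) + x³ + x² − 1 satisfies 𝒴_p(1) = 0 and 𝒴_p′(1) = 6 − p < 0, and has a real root λ > 1. -/
/-!
`𝒴_p(1) = 0` and `𝒴_p'(1) = 6 - p`, so for `p > 6` the function is negative just to the right
of `1`, while `𝒴_p(2) = 5 · 2^(p+1) + 11 > 0`; the intermediate value theorem then gives a root
in `(1, 2)`.
-/

open Set Filter Topology

theorem exists_mem_Ioo_eq_zero_of_deriv_neg {f : ℝ → ℝ} {a b : ℝ} (hab : a < b)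
    (hf : ContinuousOn f (Icc a b)) (ha : f a = 0) (hda : deriv f a < 0) (hb : 0 < f b) :
    ∃ c ∈ Ioo a b, f c = 0 := by
  have hsign : ∀ᶠ x in 𝓝[>] a, SignType.sign (f x) = SignType.sign (a - x) :=
    (eventually_nhdsWithin_sign_eq_of_deriv_neg hda ha).filter_mono nhdsWithin_le_nhds
  obtain ⟨x, hsignx, hx⟩ := (hsign.and (Ioo_mem_nhdsGT hab)).exists
  have hfx : f x < 0 := by
    rwa [sign_neg (sub_neg.mpr hx.1), sign_eq_neg_one_iff] at hsignx
  obtain ⟨c, hc, hfc⟩ :=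
    intermediate_value_Ioo hx.2.le (hf.mono (Icc_subset_Icc_left hx.1.le)) ⟨hfx, hb⟩
  exact ⟨c, ⟨hx.1.trans hc.1, hc.2⟩, hfc⟩

/-- The characteristic polynomial `𝒴_p` of the degree sequence. -/
def degreeSeqCharPoly (p : ℕ) (x : ℝ) : ℝ :=
  x ^ (p + 1) * (x ^ 3 - x - 1) + x ^ 3 + x ^ 2 - 1

namespace degreeSeqCharPoly

variable (p : ℕ)

theorem hasDerivAt (x : ℝ) :
    HasDerivAt (degreeSeqCharPoly p)
      ((p + 1) * x ^ p * (x ^ 3 - x - 1) + x ^ (p + 1) * (3 * x ^ 2 - 1) + 3 * x ^ 2 + 2 * x)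
      x := by
  have h := ((((hasDerivAt_pow (p + 1) x).fun_mul
      (((hasDerivAt_pow 3 x).fun_sub (hasDerivAt_id' x)).sub_const 1)).fun_add
    (hasDerivAt_pow 3 x)).fun_add (hasDerivAt_pow 2 x)).sub_const 1
  refine h.congr_deriv ?_
  simp only [Nat.add_sub_cancel, Nat.cast_add, Nat.cast_one, Nat.cast_ofNat]
  ring

theorem continuous : Continuous (degreeSeqCharPoly p) := by
  unfold degreeSeqCharPoly
  fun_prop

theorem eval_one : degreeSeqCharPoly p 1 = 0 := by
  norm_num [degreeSeqCharPoly]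

theorem deriv_one : deriv (degreeSeqCharPoly p) 1 = 6 - p := by
  rw [(hasDerivAt p 1).deriv]
  ring

theorem eval_two_pos : 0 < degreeSeqCharPoly p 2 := by
  unfold degreeSeqCharPoly
  have : (0 : ℝ) < 2 ^ (p + 1) := by positivity
  nlinarith

end degreeSeqCharPoly

/-- For every natural `p > 6`, the real polynomial
`𝒴_p(x) = x^(p+1)(x³ − x − 1) + x³ + x² − 1` satisfies `𝒴_p(1) = 0` and
`𝒴_p'(1) = 6 − p < 0`, and has a real root `λ > 1`. -/
theorem stmt6 (p : ℕ) (hp : 6 < p) (Yp : ℝ → ℝ)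
    (hYp : ∀ x : ℝ, Yp x = x ^ (p + 1) * (x ^ 3 - x - 1) + x ^ 3 + x ^ 2 - 1) :
    Yp 1 = 0 ∧ deriv Yp 1 = 6 - (p : ℝ) ∧ deriv Yp 1 < 0 ∧
      ∃ lam : ℝ, 1 < lam ∧ Yp lam = 0 := by
  obtain rfl : Yp = degreeSeqCharPoly p := funext hYp
  have hderiv_neg : deriv (degreeSeqCharPoly p) 1 < 0 := by
    rw [degreeSeqCharPoly.deriv_one, sub_neg]
    exact_mod_cast hp
  obtain ⟨lam, hlam, hroot⟩ := exists_mem_Ioo_eq_zero_of_deriv_neg one_lt_two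
    (degreeSeqCharPoly.continuous p).continuousOn (degreeSeqCharPoly.eval_one p) hderiv_neg
    (degreeSeqCharPoly.eval_two_pos p)
  exact ⟨degreeSeqCharPoly.eval_one p, degreeSeqCharPoly.deriv_one p, hderiv_neg, lam, hlam.1,
    hroot⟩
end

section
/- There exists a sequence (λ_p)_{p∈ℕ} of real numbers such that for every natural number p one has 1 < λ_p < (1+√5)/2 and λ_p^{p+1}(λ_p² − λ_p − 1) + λ_p² − 1 = 0, and λ_p tends to (1+√5)/2 as p → ∞. In particular, for every p ∈ ℕ the polynomial x^{p+1}(x²−x−1)+x²−1 has a real root strictly between 1 and the golden mean. -/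
open Filter

lemma aux_root (p : ℕ) :
    ∃ x : ℝ, 1 < x ∧ x < (1 + Real.sqrt 5) / 2 ∧
      x ^ (p + 1) * (x ^ 2 - x - 1) + x ^ 2 - 1 = 0 := by
  have hs : Real.sqrt 5 ^ 2 = 5 := Real.sq_sqrt (by norm_num)
  have hs2 : 2 < Real.sqrt 5 := by
    nlinarith [Real.sqrt_nonneg 5]
  set φ : ℝ := (1 + Real.sqrt 5) / 2 with hφ
  have hφ1 : 1 < φ := by rw [hφ]; nlinarith
  set f : ℝ → ℝ := fun x => x ^ (p + 1) * (x ^ 2 - x - 1) + x ^ 2 - 1 with hf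
  have hcont : ContinuousOn f (Set.Icc 1 φ) := by fun_prop
  have h1 : f 1 = -1 := by simp [hf]
  have h2 : f φ = φ := by
    have : φ ^ 2 - φ - 1 = 0 := by rw [hφ]; nlinarith
    simp [hf, this]; nlinarith [this]
  have := intermediate_value_Ioo (le_of_lt hφ1) hcont
  have h0 : (0:ℝ) ∈ Set.Ioo (f 1) (f φ) := by
    rw [h1, h2]; constructor <;> [norm_num; linarith]
  obtain ⟨x, hx, hfx⟩ := this h0
  exact ⟨x, hx.1, hx.2, hfx⟩

/-- There is a sequence `(λ_p)_{p∈ℕ}` of reals with `1 < λ_p < (1+√5)/2`,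
`λ_p^(p+1)(λ_p² − λ_p − 1) + λ_p² − 1 = 0`, and `λ_p → (1+√5)/2` as `p → ∞`.
In particular, for every `p ∈ ℕ` the polynomial `x^(p+1)(x²−x−1)+x²−1` has a
real root strictly between `1` and the golden mean. -/
theorem stmt7 :
    (∃ lam : ℕ → ℝ,
      (∀ p : ℕ,
        1 < lam p ∧ lam p < (1 + Real.sqrt 5) / 2 ∧
          (lam p) ^ (p + 1) * ((lam p) ^ 2 - lam p - 1) + (lam p) ^ 2 - 1 = 0) ∧
      Tendsto lam atTop (nhds ((1 + Real.sqrt 5) / 2))) ∧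
    ∀ p : ℕ,
      ∃ x : ℝ, 1 < x ∧ x < (1 + Real.sqrt 5) / 2 ∧
        x ^ (p + 1) * (x ^ 2 - x - 1) + x ^ 2 - 1 = 0 := by
  have hs : Real.sqrt 5 ^ 2 = 5 := Real.sq_sqrt (by norm_num)
  have hs2 : 2 < Real.sqrt 5 := by nlinarith [Real.sqrt_nonneg 5]
  have hs3 : Real.sqrt 5 < 3 := by nlinarith [Real.sqrt_nonneg 5]
  refine ⟨⟨fun p => (aux_root p).choose, fun p => (aux_root p).choose_spec, ?_⟩, aux_root⟩
  set φ : ℝ := (1 + Real.sqrt 5) / 2 with hφ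
  rw [Metric.tendsto_atTop]
  intro ε hε
  obtain ⟨N, hN⟩ := pow_unbounded_of_one_lt (2 / ε) (by norm_num : (1:ℝ) < 5/4)
  refine ⟨N, fun p hp => ?_⟩
  obtain ⟨hx1, hxφ, hroot⟩ := (aux_root p).choose_spec
  set x : ℝ := (aux_root p).choose
  rw [Real.dist_eq, abs_lt]
  refine ⟨?_, by linarith⟩
  by_contra hcon
  push_neg at hcon
  have hge : ε ≤ φ - x := by linarith
  -- equation rearranged
  have heq : x ^ (p + 1) * (1 + x - x ^ 2) = x ^ 2 - 1 := by nlinarith [hroot]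
  have hpos : (0:ℝ) < 1 + x - x ^ 2 := by
    have : 2 * x - 1 < Real.sqrt 5 := by linarith [hxφ]
    nlinarith
  have hxpow : 1 < x ^ (p + 1) := one_lt_pow₀ hx1 (Nat.succ_ne_zero p)
  -- x > 5/4
  have hx54 : (5:ℝ)/4 < x := by nlinarith [hxpow, hpos, heq]
  -- 1 + x - x^2 ≥ ε
  have hfac : ε ≤ 1 + x - x ^ 2 := by
    have h1 : ε ≤ φ - x := hge
    have h2 : (1:ℝ) ≤ x - (1 - Real.sqrt 5) / 2 := by linarith
    nlinarith [mul_le_mul h1 h2 (by norm_num) (by linarith : (0:ℝ) ≤ φ - x), hφ]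
  -- x^2 - 1 < 2
  have hxu : x ^ 2 - 1 < 2 := by
    have : x < 2 := by nlinarith [hxφ]
    nlinarith
  -- so x^(p+1) * ε ≤ 2
  have hsmall : x ^ (p + 1) * ε < 2 := by
    calc x ^ (p + 1) * ε ≤ x ^ (p + 1) * (1 + x - x ^ 2) :=
          mul_le_mul_of_nonneg_left hfac (by positivity)
      _ = x ^ 2 - 1 := heq
      _ < 2 := hxu
  -- but x^(p+1) ≥ (5/4)^N > 2/ε
  have hbig : (5/4 : ℝ) ^ N ≤ x ^ (p + 1) := by
    calc (5/4:ℝ) ^ N ≤ (5/4:ℝ) ^ (p+1) :=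
          pow_le_pow_right₀ (by norm_num) (by omega)
      _ ≤ x ^ (p + 1) := pow_le_pow_left₀ (by norm_num) (le_of_lt hx54) _
  have : 2 / ε < x ^ (p+1) := lt_of_lt_of_le hN hbig
  have := (div_lt_iff₀ hε).mp this
  linarith [hsmall]
end

section
/- Let α₁ ∈ ℂ with α₁ ≠ 0, set ω = (α₁² − 1)/α₁, and define f(x,y) = (ω + α₁x + y, (ω + y)/x) and V(x,y) = (1 + α₁x)(α₁ + α₁x + y)/x. Then for every (x,y) ∈ ℂ² with x ≠ 0 and ω + α₁x + y ≠ 0, one has V(f(x,y)) = α₁·V(x,y). Consequently, if n ≥ 1 is a natural number with α₁ⁿ = 1, then W = Vⁿ satisfies W(f(x,y)) = W(x,y) on the same set, i.e. W is a first integral of f. -/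
/-!
Put `u = ω + α₁x + y`, the first coordinate of `f(x,y)`. Since `ω + y = u - α₁x`, the second
factor of `V(f(x,y))` collapses to `u(1 + α₁x)/x`, cancelling the denominator `u`; and
`α₁ω = α₁² - 1` turns the first factor `1 + α₁u` into `α₁(α₁ + α₁x + y)`.
-/

section Field

variable {K : Type*} [Field K]

theorem add_mul_add_div_eq {α ω x y : K} (hx : x ≠ 0) :
    α + α * (ω + α * x + y) + (ω + y) / x = (ω + α * x + y) * (1 + α * x) / x := by
  field_simp
  ring

theorem one_add_mul_eq_mul {α ω x y : K} (hω : α * ω = α ^ 2 - 1) :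
    1 + α * (ω + α * x + y) = α * (α + α * x + y) := by
  linear_combination hω

theorem fibration_map_eq_mul {α ω x y : K} (hω : α * ω = α ^ 2 - 1) (hx : x ≠ 0)
    (hu : ω + α * x + y ≠ 0) :
    (1 + α * (ω + α * x + y)) * (α + α * (ω + α * x + y) + (ω + y) / x) / (ω + α * x + y) =
      α * ((1 + α * x) * (α + α * x + y) / x) := by
  rw [add_mul_add_div_eq hx, one_add_mul_eq_mul hω]
  field_simp

end Field

/-- For `f(x,y) = (ω + α₁x + y, (ω+y)/x)` with `ω = (α₁²−1)/α₁`, the function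
`V(x,y) = (1+α₁x)(α₁+α₁x+y)/x` satisfies `V∘f = α₁·V`; consequently if
`α₁ⁿ = 1` with `n ≥ 1` then `W = Vⁿ` is a first integral of `f`. -/
theorem stmt9 (α₁ : ℂ) (hα : α₁ ≠ 0) (ω : ℂ) (hω : ω = (α₁ ^ 2 - 1) / α₁)
    (f : ℂ × ℂ → ℂ × ℂ)
    (hf : ∀ x y : ℂ, f (x, y) = (ω + α₁ * x + y, (ω + y) / x))
    (V : ℂ × ℂ → ℂ)
    (hV : ∀ x y : ℂ, V (x, y) = (1 + α₁ * x) * (α₁ + α₁ * x + y) / x) :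
    (∀ x y : ℂ, x ≠ 0 → ω + α₁ * x + y ≠ 0 →
        V (f (x, y)) = α₁ * V (x, y)) ∧
    ∀ n : ℕ, 1 ≤ n → α₁ ^ n = 1 →
      ∀ x y : ℂ, x ≠ 0 → ω + α₁ * x + y ≠ 0 →
        (V (f (x, y))) ^ n = (V (x, y)) ^ n := by
  have hαω : α₁ * ω = α₁ ^ 2 - 1 := by rw [hω, mul_div_cancel₀ _ hα]
  have hVf : ∀ x y : ℂ, x ≠ 0 → ω + α₁ * x + y ≠ 0 → V (f (x, y)) = α₁ * V (x, y) := by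
    intro x y hx hu
    rw [hf, hV, hV]
    exact fibration_map_eq_mul hαω hx hu
  refine ⟨hVf, fun n _ hn x y hx hu => ?_⟩
  rw [hVf x y hx hu, mul_pow, hn, one_mul]
end

section
/- Let α₂, β₂ ∈ ℂ with β₂ ≠ 0, and define f(x,y) = (α₂y, β₂y/(−α₂β₂ + x + y)) and V(x,y) = (β₂ − y)(α₂β₂ − x)/y. Then for every (x,y) ∈ ℂ² with y ≠ 0 and −α₂β₂ + x + y ≠ 0, one has V(f(x,y)) = −α₂·V(x,y). Consequently, if n ≥ 1 is a natural number with (−α₂)ⁿ = 1, then W = Vⁿ satisfies W(f(x,y)) = W(x,y) on the same set, i.e. W is a first integral of f. -/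
/- With `D = -(α₂β₂) + x + y`, the two factors of `V ∘ f` become `β₂(x - α₂β₂)/D` and
`α₂(β₂ - y)`, so dividing by `β₂y/D` cancels `β₂` and `D` and leaves `-α₂ V`. -/

theorem fibration_map_eq_neg_mul {K : Type*} [Field K] {a b x y : K}
    (hb : b ≠ 0) (hy : y ≠ 0) (hD : -(a * b) + x + y ≠ 0) :
    (b - b * y / (-(a * b) + x + y)) * (a * b - a * y) / (b * y / (-(a * b) + x + y)) =
      -a * ((b - y) * (a * b - x) / y) := by
  set D := -(a * b) + x + y
  have first : a * b - a * y = a * (b - y) := by ring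
  have second : b - b * y / D = b * (x - a * b) / D := by
    field_simp
    ring
  rw [first, second]
  field_simp
  ring

theorem pow_eq_pow_of_eq_mul_of_pow_eq_one {M : Type*} [CommMonoid M] {a b c : M} {n : ℕ}
    (h : b = c * a) (hc : c ^ n = 1) : b ^ n = a ^ n := by
  rw [h, mul_pow, hc, one_mul]

/-- For `f(x,y) = (α₂y, β₂y/(−α₂β₂+x+y))` with `β₂ ≠ 0`, the function
`V(x,y) = (β₂−y)(α₂β₂−x)/y` satisfies `V∘f = −α₂·V`; consequently if
`(−α₂)ⁿ = 1` with `n ≥ 1` then `W = Vⁿ` is a first integral of `f`. -/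
theorem stmt10 (α₂ β₂ : ℂ) (hβ : β₂ ≠ 0)
    (f : ℂ × ℂ → ℂ × ℂ)
    (hf : ∀ x y : ℂ, f (x, y) = (α₂ * y, β₂ * y / (-(α₂ * β₂) + x + y)))
    (V : ℂ × ℂ → ℂ)
    (hV : ∀ x y : ℂ, V (x, y) = (β₂ - y) * (α₂ * β₂ - x) / y) :
    (∀ x y : ℂ, y ≠ 0 → -(α₂ * β₂) + x + y ≠ 0 →
        V (f (x, y)) = -α₂ * V (x, y)) ∧
    ∀ n : ℕ, 1 ≤ n → (-α₂) ^ n = 1 →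
      ∀ x y : ℂ, y ≠ 0 → -(α₂ * β₂) + x + y ≠ 0 →
        (V (f (x, y))) ^ n = (V (x, y)) ^ n := by
  have semiconj : ∀ x y : ℂ, y ≠ 0 → -(α₂ * β₂) + x + y ≠ 0 →
      V (f (x, y)) = -α₂ * V (x, y) := by
    intro x y hy hD
    rw [hf, hV, hV]
    exact fibration_map_eq_neg_mul hβ hy hD
  exact ⟨semiconj, fun n _ hn x y hy hD =>
    pow_eq_pow_of_eq_mul_of_pow_eq_one (semiconj x y hy hD) hn⟩
end
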